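/- Let p be an odd prime. Then 5 divides S_A(4) if and only if 5 divides p − 2. -/

import Mathlib

/-- The quaternary cyclotomic sequence of period 2p from Kim et al.:
`a 0 = 0`, `a p = 2`; for odd `i ≠ p`, value `0`/`1` according to Legendre symbol `(i/p) = ±1`;
for even `i > 0`, value `2`/`3` according to `((i/2)/p) = ±1`. -/
def seqA (p : ℕ) [Fact p.Prime] (i : ℕ) : ℤ :=
  if i = 0 then 0
  else if i = p then 2
  else if i % 2 = 1 then (if legendreSym p i = 1 then 0 else 1)
  else if legendreSym p (i / 2) = 1 then 2 else 3

/-- `S_A(4) = Σ_{i=0}^{2p-1} a(i)·4^i`. -/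
def SA (p : ℕ) [Fact p.Prime] : ℤ := ∑ i ∈ Finset.range (2 * p), seqA p i * 4 ^ i

/-- The Gauss sum `G_p = Σ_{a=1}^{p-1} (a/p)·4^{2a}`. -/
def Gp (p : ℕ) [Fact p.Prime] : ℤ := ∑ a ∈ Finset.Icc 1 (p - 1), legendreSym p a * 4 ^ (2 * a)

/-! Since `4 ^ 2 ≡ 1 (mod 5)`, modulo 5 the sum `S_A(4)` is `∑ₖ (a(2k) + 4 a(2k+1))` over `k < p`.
Modulo 5 the values of the sequence are affine in the Legendre symbol: `a(2k) ≡ 2 (k/p)` and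
`a(2k+1) ≡ 3 - 3 ((2k+1)/p)` (with a correction of `-1` at `2k+1 = p`). As `k` and `2k+1` both run
over all residues mod `p`, the Legendre-symbol sums vanish and `S_A(4) ≡ 12p - 4 ≡ 2p + 1`. -/

open Finset

theorem Finset.sum_range_two_mul {M : Type*} [AddCommMonoid M] (n : ℕ) (f : ℕ → M) :
    ∑ i ∈ range (2 * n), f i = ∑ k ∈ range n, (f (2 * k) + f (2 * k + 1)) := by
  induction n with
  | zero => simp
  | succ n ih =>
    rw [mul_add_one, sum_range_succ, sum_range_succ, add_assoc, ih, sum_range_succ]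

theorem ZMod.sum_range_natCast {M : Type*} [AddCommMonoid M] (n : ℕ) [NeZero n]
    (g : ZMod n → M) : ∑ k ∈ range n, g k = ∑ a : ZMod n, g a :=
  sum_nbij' (fun k ↦ (k : ZMod n)) ZMod.val (fun _ _ ↦ mem_univ _)
    (fun a _ ↦ mem_range.mpr a.val_lt) (fun _ hk ↦ ZMod.val_cast_of_lt (mem_range.mp hk))
    (fun a _ ↦ ZMod.natCast_zmod_val a) (fun _ _ ↦ rfl)

namespace legendreSym

variable {p : ℕ} [Fact p.Prime]

theorem sum_range_affine_eq_zero (hp : p ≠ 2) {a : ℤ} (ha : (a : ZMod p) ≠ 0) (b : ℤ) :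
    ∑ k ∈ range p, legendreSym p (a * k + b) = 0 := by
  have hchar : ringChar (ZMod p) ≠ 2 := by rwa [ZMod.ringChar_zmod_n]
  simp only [legendreSym, Int.cast_add, Int.cast_mul, Int.cast_natCast]
  rw [ZMod.sum_range_natCast p (fun x ↦ quadraticChar (ZMod p) (a * x + b)),
    ← quadraticChar_sum_zero hchar]
  exact ((Equiv.mulLeft₀ _ ha).trans (Equiv.addRight _)).sum_comp (quadraticChar (ZMod p))

theorem eq_one_or_neg_one_of_not_dvd {n : ℕ} (hn : ¬ p ∣ n) :
    legendreSym p n = 1 ∨ legendreSym p n = -1 :=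
  eq_one_or_neg_one p (by rwa [Int.cast_natCast, Ne, ZMod.natCast_eq_zero_iff])

end legendreSym

section

variable {p : ℕ} [Fact p.Prime]

theorem cast_seqA_two_mul (hp : p ≠ 2) {k : ℕ} (hk : k < p) :
    (seqA p (2 * k) : ZMod 5) = 2 * legendreSym p k := by
  have hodd : p % 2 = 1 := Nat.odd_iff.mp ((Fact.out : p.Prime).odd_of_ne_two hp)
  rcases Nat.eq_zero_or_pos k with rfl | hk₀
  · simp [seqA]
  have hhalf : ((2 * k : ℕ) : ℤ) / 2 = k := by push_cast; omega
  have hseq : seqA p (2 * k) = if legendreSym p k = 1 then 2 else 3 := by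
    rw [seqA, if_neg (by omega), if_neg (by grind), if_neg (by omega), hhalf]
  rcases legendreSym.eq_one_or_neg_one_of_not_dvd (Nat.not_dvd_of_pos_of_lt hk₀ hk) with h | h <;>
    simp only [hseq, h] <;> decide

theorem cast_seqA_two_mul_add_one {k : ℕ} (hk : k < p) :
    (seqA p (2 * k + 1) : ZMod 5) =
      3 - 3 * legendreSym p (2 * k + 1 : ℕ) - if 2 * k + 1 = p then 1 else 0 := by
  by_cases hkp : 2 * k + 1 = p
  · have hzero : legendreSym p (2 * k + 1 : ℕ) = 0 := by
      rw [legendreSym.eq_zero_iff, Int.cast_natCast, hkp, ZMod.natCast_self]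
    rw [seqA, if_neg (by omega), if_pos hkp, if_pos hkp, hzero]
    decide
  · have hndvd : ¬ p ∣ 2 * k + 1 := by
      rintro ⟨m, hm⟩
      rcases m with _ | _ | m <;> grind
    have hseq : seqA p (2 * k + 1) = if legendreSym p (2 * k + 1 : ℕ) = 1 then 0 else 1 := by
      rw [seqA, if_neg (by omega), if_neg hkp, if_pos (by omega)]
    rcases legendreSym.eq_one_or_neg_one_of_not_dvd hndvd with h | h <;>
      simp only [hseq, h, hkp] <;> decide

theorem cast_SA (hp : p ≠ 2) : (SA p : ZMod 5) = 2 * p + 1 := by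
  have hodd : p % 2 = 1 := Nat.odd_iff.mp ((Fact.out : p.Prime).odd_of_ne_two hp)
  have hfour : (4 : ZMod 5) ^ 2 = 1 := by decide
  have hmid : ∀ k, 2 * k + 1 = p ↔ k = p / 2 := by omega
  have hsum₁ := legendreSym.sum_range_affine_eq_zero hp (a := 1) (by simp) 0
  have hsum₂ := legendreSym.sum_range_affine_eq_zero hp (a := 2)
    (by simpa using Ring.two_ne_zero (R := ZMod p) (by rwa [ZMod.ringChar_zmod_n])) 1
  calc (SA p : ZMod 5)
      = ∑ k ∈ range p, ((seqA p (2 * k) : ZMod 5) * 4 ^ (2 * k)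
          + (seqA p (2 * k + 1) : ZMod 5) * 4 ^ (2 * k + 1)) := by
        rw [SA, Int.cast_sum, sum_range_two_mul]
        push_cast
        rfl
    _ = ∑ k ∈ range p, (2 * (legendreSym p k : ZMod 5)
          + 4 * (3 - 3 * legendreSym p (2 * k + 1 : ℕ) - if k = p / 2 then 1 else 0)) := by
        refine sum_congr rfl fun k hk ↦ ?_
        rw [cast_seqA_two_mul hp (mem_range.mp hk), cast_seqA_two_mul_add_one (mem_range.mp hk),
          pow_succ, pow_mul, hfour, one_pow, one_mul, mul_one, mul_comm _ (4 : ZMod 5)]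
        simp only [hmid]
    _ = 2 * p + 1 := by
        have s₁ : ∑ k ∈ range p, (legendreSym p k : ZMod 5) = 0 := by
          rw [← Int.cast_sum]; simpa using congrArg ((↑) : ℤ → ZMod 5) hsum₁
        have s₂ : ∑ k ∈ range p, (legendreSym p (2 * k + 1 : ℕ) : ZMod 5) = 0 := by
          rw [← Int.cast_sum]; simpa using congrArg ((↑) : ℤ → ZMod 5) hsum₂
        simp only [sum_add_distrib, sum_sub_distrib, ← mul_sum, sum_const, card_range, sum_ite_eq',
          mem_range, s₁, s₂]
        have hfive : (5 : ZMod 5) = 0 := by decide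
        rw [if_pos (by omega), nsmul_eq_mul]
        linear_combination (2 * (p : ZMod 5) - 1) * hfive

end

/-- `5 ∣ S_A(4)` iff `5 ∣ p − 2`. -/
theorem stmt5 (p : ℕ) [Fact p.Prime] (hodd : Odd p) :
    (5 : ℤ) ∣ SA p ↔ (5 : ℤ) ∣ (p : ℤ) - 2 := by
  have hp : p ≠ 2 := by rintro rfl; contradiction
  have hdvd (a : ℤ) : (5 : ℤ) ∣ a ↔ (a : ZMod 5) = 0 :=
    (ZMod.intCast_zmod_eq_zero_iff_dvd a 5).symm
  rw [hdvd, hdvd, cast_SA hp]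
  push_cast
  generalize (p : ZMod 5) = x
  revert x
  decide
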